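/- arXiv:2003.09711 — 2 statements merged into one kernel-verified Lean document; each statement's English description precedes it below -/
import Mathlib

section
/- Let G be any hypothesis in class 𝒢. Then the target risk satisfies R^t(G) ≤ inf_{G*∈𝒢} R^t(G*) + R^s(G) + (1/2)·d_𝒢(Q_X, U_X), where R^s(G) = (1/2)E_{x∼P_X}L(G,x,1) + (1/2)E_{x∼U_X}L(G,x,0), R^t(G) = (1/2)E_{x∼P_X}L(G,x,1) + (1/2)E_{x∼Q_X}L(G,x,0), and d_𝒢(Q_X,U_X) = sup_{G,G'∈𝒢} [v(G,G';Q_X) − v(G,G';U_X)] with v(G,G';D) = E_{x∼D}[L(G,x,0) − L(G',x,0)]. -/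
open MeasureTheory

/-- Source risk: labels 1 on `P` and 0 on `U`. -/
noncomputable def srcRisk {X G : Type*} [MeasurableSpace X]
    (P U : Measure X) (ℓ0 ℓ1 : G → X → ℝ) (g : G) : ℝ :=
  (1/2) * ∫ x, ℓ1 g x ∂P + (1/2) * ∫ x, ℓ0 g x ∂U

/-- Target risk: labels 1 on `P` and 0 on `Q`. -/
noncomputable def tgtRisk {X G : Type*} [MeasurableSpace X]
    (P Q : Measure X) (ℓ0 ℓ1 : G → X → ℝ) (g : G) : ℝ :=
  (1/2) * ∫ x, ℓ1 g x ∂P + (1/2) * ∫ x, ℓ0 g x ∂Q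

/-- Loss difference of two hypotheses on distribution `D` (label 0). -/
noncomputable def vDiff {X G : Type*} [MeasurableSpace X]
    (D : Measure X) (ℓ0 : G → X → ℝ) (g g' : G) : ℝ :=
  ∫ x, (ℓ0 g x - ℓ0 g' x) ∂D

/-- Divergence of `Q` and `U` with respect to the hypothesis class `G`. -/
noncomputable def dDiv {X G : Type*} [MeasurableSpace X]
    (Q U : Measure X) (ℓ0 : G → X → ℝ) : ℝ :=
  ⨆ p : G × G, (vDiff Q ℓ0 p.1 p.2 - vDiff U ℓ0 p.1 p.2)

/-- Theorem 1: the target risk of any `g` is bounded by the best target risk plus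
the source risk of `g` plus half the divergence. -/
theorem target_risk_bound {X G : Type*} [MeasurableSpace X] [Nonempty G]
    (P U Q : Measure X)
    [IsProbabilityMeasure P] [IsProbabilityMeasure U] [IsProbabilityMeasure Q]
    (ℓ0 ℓ1 : G → X → ℝ)
    (hb0 : ∀ g x, ℓ0 g x ∈ Set.Icc (0:ℝ) 1)
    (hb1 : ∀ g x, ℓ1 g x ∈ Set.Icc (0:ℝ) 1)
    (hint1P : ∀ g, Integrable (ℓ1 g) P)
    (hint0U : ∀ g, Integrable (ℓ0 g) U)
    (hint0Q : ∀ g, Integrable (ℓ0 g) Q)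
    (g : G) :
    tgtRisk P Q ℓ0 ℓ1 g ≤
      (⨅ g' : G, tgtRisk P Q ℓ0 ℓ1 g') + srcRisk P U ℓ0 ℓ1 g
        + (1/2) * dDiv Q U ℓ0 := by
  have keyd : ∀ a b : G, vDiff Q ℓ0 a b - vDiff U ℓ0 a b ≤ dDiv Q U ℓ0 := by
    intro a b
    have hbdd : BddAbove (Set.range fun p : G × G =>
        vDiff Q ℓ0 p.1 p.2 - vDiff U ℓ0 p.1 p.2) := by
      refine ⟨2, ?_⟩
      rintro x ⟨p, rfl⟩
      have h1 : vDiff Q ℓ0 p.1 p.2 ≤ 1 := by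
        rw [vDiff]
        calc ∫ x, (ℓ0 p.1 x - ℓ0 p.2 x) ∂Q ≤ ∫ _x, (1:ℝ) ∂Q := by
              apply integral_mono ((hint0Q p.1).sub (hint0Q p.2)) (integrable_const 1)
              intro x
              simp only [Pi.sub_apply]
              linarith [(hb0 p.1 x).2, (hb0 p.2 x).1]
          _ = 1 := by simp
      have h2 : (-1:ℝ) ≤ vDiff U ℓ0 p.1 p.2 := by
        rw [vDiff]
        calc (-1:ℝ) = ∫ _x, (-1:ℝ) ∂U := by simp
          _ ≤ ∫ x, (ℓ0 p.1 x - ℓ0 p.2 x) ∂U := by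
              apply integral_mono (integrable_const (-1)) ((hint0U p.1).sub (hint0U p.2))
              intro x
              simp only [Pi.sub_apply]
              linarith [(hb0 p.1 x).1, (hb0 p.2 x).2]
      simp only at *
      linarith
    exact le_ciSup hbdd (a, b)
  have key : ∀ g' : G,
      tgtRisk P Q ℓ0 ℓ1 g - srcRisk P U ℓ0 ℓ1 g - (1/2) * dDiv Q U ℓ0
        ≤ tgtRisk P Q ℓ0 ℓ1 g' := by
    intro g'
    have hd := keyd g g'
    have hvQ : vDiff Q ℓ0 g g' = (∫ x, ℓ0 g x ∂Q) - ∫ x, ℓ0 g' x ∂Q := by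
      rw [vDiff]; exact integral_sub (hint0Q g) (hint0Q g')
    have hvU : vDiff U ℓ0 g g' = (∫ x, ℓ0 g x ∂U) - ∫ x, ℓ0 g' x ∂U := by
      rw [vDiff]; exact integral_sub (hint0U g) (hint0U g')
    have hA : (0:ℝ) ≤ ∫ x, ℓ1 g' x ∂P :=
      integral_nonneg fun x => (hb1 g' x).1
    have hBU : (0:ℝ) ≤ ∫ x, ℓ0 g' x ∂U :=
      integral_nonneg fun x => (hb0 g' x).1
    rw [hvQ, hvU] at hd
    simp only [tgtRisk, srcRisk]
    linarith
  have := le_ciInf key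
  linarith [this]
end

section
/- For any two hypotheses G, G' in 𝒢 and any distributions Q_X, U_X, the difference of their target and source risks satisfies (R^t(G) − R^t(G')) − (R^s(G) − R^s(G')) ≤ (1/2)·d_𝒢(Q_X, U_X). In particular, if R^s(G) ≤ R^s(G') then R^t(G) ≤ R^t(G') + (1/2)·d_𝒢(Q_X, U_X) (the rank-preserving property). -/
open MeasureTheory

lemma vDiff_le_one {X G : Type*} [MeasurableSpace X]
    (D : Measure X) [IsProbabilityMeasure D] (ℓ0 : G → X → ℝ)
    (hb0 : ∀ g x, ℓ0 g x ∈ Set.Icc (0:ℝ) 1)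
    (hint : ∀ g, Integrable (ℓ0 g) D) (g g' : G) :
    vDiff D ℓ0 g g' ≤ 1 := by
  have h : vDiff D ℓ0 g g' ≤ ∫ _x, (1:ℝ) ∂D := by
    apply integral_mono ((hint g).sub (hint g')) (integrable_const 1)
    intro x
    have h1 := hb0 g x
    have h2 := hb0 g' x
    simp only [Set.mem_Icc] at h1 h2
    simp only [Pi.sub_apply]
    linarith
  simpa using h

lemma neg_one_le_vDiff {X G : Type*} [MeasurableSpace X]
    (D : Measure X) [IsProbabilityMeasure D] (ℓ0 : G → X → ℝ)
    (hb0 : ∀ g x, ℓ0 g x ∈ Set.Icc (0:ℝ) 1)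
    (hint : ∀ g, Integrable (ℓ0 g) D) (g g' : G) :
    (-1 : ℝ) ≤ vDiff D ℓ0 g g' := by
  have h : ∫ _x, (-1:ℝ) ∂D ≤ vDiff D ℓ0 g g' := by
    apply integral_mono (integrable_const (-1)) ((hint g).sub (hint g'))
    intro x
    have h1 := hb0 g x
    have h2 := hb0 g' x
    simp only [Set.mem_Icc] at h1 h2
    simp only [Pi.sub_apply]
    linarith
  simpa using h

/-- Rank preservation: the change in risk gap from source to target is at most half
the divergence; in particular a hypothesis ranked better on the source is, up to
half the divergence, also better on the target. -/
theorem rank_preserving {X G : Type*} [MeasurableSpace X]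
    (P U Q : Measure X)
    [IsProbabilityMeasure P] [IsProbabilityMeasure U] [IsProbabilityMeasure Q]
    (ℓ0 ℓ1 : G → X → ℝ)
    (hb0 : ∀ g x, ℓ0 g x ∈ Set.Icc (0:ℝ) 1)
    (hb1 : ∀ g x, ℓ1 g x ∈ Set.Icc (0:ℝ) 1)
    (hint1P : ∀ g, Integrable (ℓ1 g) P)
    (hint0U : ∀ g, Integrable (ℓ0 g) U)
    (hint0Q : ∀ g, Integrable (ℓ0 g) Q)
    (g g' : G) :
    (tgtRisk P Q ℓ0 ℓ1 g - tgtRisk P Q ℓ0 ℓ1 g')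
        - (srcRisk P U ℓ0 ℓ1 g - srcRisk P U ℓ0 ℓ1 g')
      ≤ (1/2) * dDiv Q U ℓ0 ∧
    (srcRisk P U ℓ0 ℓ1 g ≤ srcRisk P U ℓ0 ℓ1 g' →
      tgtRisk P Q ℓ0 ℓ1 g ≤ tgtRisk P Q ℓ0 ℓ1 g' + (1/2) * dDiv Q U ℓ0) := by
  have hbdd : BddAbove (Set.range fun p : G × G =>
      vDiff Q ℓ0 p.1 p.2 - vDiff U ℓ0 p.1 p.2) := by
    refine ⟨2, ?_⟩
    rintro _ ⟨p, rfl⟩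
    dsimp only
    have h1 := vDiff_le_one Q ℓ0 hb0 hint0Q p.1 p.2
    have h2 := neg_one_le_vDiff U ℓ0 hb0 hint0U p.1 p.2
    linarith
  have hle : vDiff Q ℓ0 g g' - vDiff U ℓ0 g g' ≤ dDiv Q U ℓ0 :=
    le_ciSup hbdd (g, g')
  have hQ : vDiff Q ℓ0 g g' = (∫ x, ℓ0 g x ∂Q) - ∫ x, ℓ0 g' x ∂Q := by
    simpa [vDiff] using integral_sub (hint0Q g) (hint0Q g')
  have hU : vDiff U ℓ0 g g' = (∫ x, ℓ0 g x ∂U) - ∫ x, ℓ0 g' x ∂U := by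
    simpa [vDiff] using integral_sub (hint0U g) (hint0U g')
  have key : (tgtRisk P Q ℓ0 ℓ1 g - tgtRisk P Q ℓ0 ℓ1 g')
        - (srcRisk P U ℓ0 ℓ1 g - srcRisk P U ℓ0 ℓ1 g')
      = (1/2) * (vDiff Q ℓ0 g g' - vDiff U ℓ0 g g') := by
    simp only [tgtRisk, srcRisk, hQ, hU]; ring
  constructor
  · rw [key]; linarith
  · intro hs
    have h := key
    nlinarith
end
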